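/- arXiv:2510.15743 — 3 statements merged into one kernel-verified Lean document; each statement's English description precedes it below -/
import Mathlib

section
/- Let k be a field of characteristic 2 containing a primitive cube root of unity ζ, let G be a group, and let σ, ρ ∈ G satisfy σ² = ρ³ = (σρ)³ = 1. In the group algebra kG set τ := ρσρ⁻¹, A := σ − 1, B := τ − 1, and define C := ζA + ζ²B + AB and D := A + ζ²B + ζAB. Then ρCρ⁻¹ = ζC, ρDρ⁻¹ = ζ²D, C² = 0, D² = 0, and CD = DC = ζAB. -/
set_option maxHeartbeats 2000000 in
private theorem aux8 {R : Type*} [Ring R] (z s t r r' : R)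
    (hchar : ∀ x : R, x + x = 0)
    (hz2 : z * z + z + 1 = 0)
    (hzs : s * z = z * s) (hzt : t * z = z * t)
    (hss : s * s = 1) (htt : t * t = 1) (hts : t * s = s * t)
    (hrr' : r * r' = 1)
    (hrs : r * s = t * r) (hrt : r * t = s * (t * r)) (hrz : r * z = z * r) :
    (r * (z * (s - 1) + z ^ 2 * (t - 1) + (s - 1) * (t - 1)) * r'
        = z * (z * (s - 1) + z ^ 2 * (t - 1) + (s - 1) * (t - 1))) ∧
    (r * ((s - 1) + z ^ 2 * (t - 1) + z * ((s - 1) * (t - 1))) * r'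
        = z ^ 2 * ((s - 1) + z ^ 2 * (t - 1) + z * ((s - 1) * (t - 1)))) ∧
    (z * (s - 1) + z ^ 2 * (t - 1) + (s - 1) * (t - 1)) ^ 2 = 0 ∧
    ((s - 1) + z ^ 2 * (t - 1) + z * ((s - 1) * (t - 1))) ^ 2 = 0 ∧
    (z * (s - 1) + z ^ 2 * (t - 1) + (s - 1) * (t - 1)) *
        ((s - 1) + z ^ 2 * (t - 1) + z * ((s - 1) * (t - 1)))
      = ((s - 1) + z ^ 2 * (t - 1) + z * ((s - 1) * (t - 1))) *
        (z * (s - 1) + z ^ 2 * (t - 1) + (s - 1) * (t - 1)) ∧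
    (z * (s - 1) + z ^ 2 * (t - 1) + (s - 1) * (t - 1)) *
        ((s - 1) + z ^ 2 * (t - 1) + z * ((s - 1) * (t - 1)))
      = z * ((s - 1) * (t - 1)) := by
  have hne : ∀ x : R, -x = x := fun x => neg_eq_of_add_eq_zero_left (hchar x)
  have hzz : z * z = z + 1 := by
    rw [add_assoc] at hz2
    rw [eq_neg_of_add_eq_zero_left hz2, hne]
  have hzz' : ∀ x : R, z * (z * x) = z * x + x := fun x => by
    rw [← mul_assoc, hzz, add_mul, one_mul]
  have hss' : ∀ x : R, s * (s * x) = x := fun x => by rw [← mul_assoc, hss, one_mul]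
  have htt' : ∀ x : R, t * (t * x) = x := fun x => by rw [← mul_assoc, htt, one_mul]
  have hts' : ∀ x : R, t * (s * x) = s * (t * x) := fun x => by
    rw [← mul_assoc, hts, mul_assoc]
  have hzs' : ∀ x : R, s * (z * x) = z * (s * x) := fun x => by
    rw [← mul_assoc, hzs, mul_assoc]
  have hzt' : ∀ x : R, t * (z * x) = z * (t * x) := fun x => by
    rw [← mul_assoc, hzt, mul_assoc]
  have hrs' : ∀ x : R, r * (s * x) = t * (r * x) := fun x => by
    rw [← mul_assoc, hrs, mul_assoc]
  have hrt' : ∀ x : R, r * (t * x) = s * (t * (r * x)) := fun x => by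
    rw [← mul_assoc, hrt, mul_assoc, mul_assoc]
  have hrz' : ∀ x : R, r * (z * x) = z * (r * x) := fun x => by
    rw [← mul_assoc, hrz, mul_assoc]
  have hrr'' : ∀ x : R, r * (r' * x) = x := fun x => by rw [← mul_assoc, hrr', one_mul]
  have hchar' : ∀ x y : R, x + (x + y) = y := fun x y => by
    rw [← add_assoc, hchar, zero_add]
  refine ⟨?_, ?_, ?_, ?_, ?_, ?_⟩ <;>
  · simp only [pow_two, sub_eq_add_neg, hne, mul_add, add_mul, mul_one, one_mul, mul_assoc,
      hzz, hzz', hss, hss', htt, htt', hts, hts', hzs, hzs', hzt, hzt',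
      hrs, hrs', hrt, hrt', hrz, hrz', hrr', hrr'']
    simp only [add_assoc, add_comm, add_left_comm, hchar, hchar', add_zero, zero_add]

/-- **Lemma.** With `A = σ - 1`, `B = τ - 1` as before and
`C = ζA + ζ²B + AB`, `D = A + ζ²B + ζAB` in the group algebra `kG`
(characteristic 2, `ζ` a primitive cube root of unity), one has
`ρCρ⁻¹ = ζC`, `ρDρ⁻¹ = ζ²D`, `C² = 0`, `D² = 0` and `CD = DC = ζAB`. -/
theorem stmt_8 (k : Type) [Field k] [CharP k 2] (ζ : k) (hζ : IsPrimitiveRoot ζ 3)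
    (G : Type) [Group G]
    (σ ρ : G) (hσ : σ ^ 2 = 1) (hρ : ρ ^ 3 = 1) (hσρ : (σ * ρ) ^ 3 = 1) :
    let τ : G := ρ * σ * ρ⁻¹
    let A : MonoidAlgebra k G := MonoidAlgebra.of k G σ - 1
    let B : MonoidAlgebra k G := MonoidAlgebra.of k G τ - 1
    let C : MonoidAlgebra k G := ζ • A + ζ ^ 2 • B + A * B
    let D : MonoidAlgebra k G := A + ζ ^ 2 • B + ζ • (A * B)
    MonoidAlgebra.of k G ρ * C * MonoidAlgebra.of k G ρ⁻¹ = ζ • C ∧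
    MonoidAlgebra.of k G ρ * D * MonoidAlgebra.of k G ρ⁻¹ = ζ ^ 2 • D ∧
    C ^ 2 = 0 ∧
    D ^ 2 = 0 ∧
    C * D = D * C ∧
    C * D = ζ • (A * B) := by
  intro τ A B C D
  -- group-theoretic facts
  have hσ1 : σ * σ = 1 := by rw [← pow_two]; exact hσ
  have hσinv : σ⁻¹ = σ := by rw [inv_eq_iff_mul_eq_one]; exact hσ1
  have hρ1 : ρ * ρ * ρ = 1 := by
    have h := hρ
    rw [show (3:ℕ) = 2 + 1 from rfl, pow_succ, pow_two] at h
    exact h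
  have hρρ : ρ * ρ = ρ⁻¹ := by rw [eq_inv_iff_mul_eq_one]; exact hρ1
  have hρinv2 : ρ⁻¹ * ρ⁻¹ = ρ := by
    rw [← hρρ]
    calc ρ * ρ * (ρ * ρ) = ρ * (ρ * ρ * ρ) := by group
    _ = ρ := by rw [hρ1, mul_one]
  have h6 : ρ * σ * ρ * σ * ρ * σ = 1 := by
    have h := hσρ
    rw [show (3:ℕ) = 2 + 1 from rfl, pow_succ, pow_two] at h
    calc ρ * σ * ρ * σ * ρ * σ = σ⁻¹ * (σ * ρ * (σ * ρ) * (σ * ρ)) * σ := by group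
    _ = 1 := by rw [h]; group
  have hσρσ : σ * ρ * σ = ρ⁻¹ * σ * ρ⁻¹ := by
    calc σ * ρ * σ = ρ⁻¹ * (ρ * σ * ρ * σ * ρ * σ) * (σ⁻¹ * ρ⁻¹) := by group
    _ = ρ⁻¹ * (σ⁻¹ * ρ⁻¹) := by rw [h6, mul_one]
    _ = ρ⁻¹ * σ * ρ⁻¹ := by rw [hσinv]; group
  have key : σ * ρ * σ * ρ⁻¹ = ρ⁻¹ * σ * ρ := by
    calc σ * ρ * σ * ρ⁻¹ = (σ * ρ * σ) * ρ⁻¹ := by group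
    _ = (ρ⁻¹ * σ * ρ⁻¹) * ρ⁻¹ := by rw [hσρσ]
    _ = ρ⁻¹ * σ * (ρ⁻¹ * ρ⁻¹) := by group
    _ = ρ⁻¹ * σ * ρ := by rw [hρinv2]
  have hστ : σ * (ρ * σ * ρ⁻¹) = ρ⁻¹ * σ * ρ := by
    calc σ * (ρ * σ * ρ⁻¹) = σ * ρ * σ * ρ⁻¹ := by group
    _ = ρ⁻¹ * σ * ρ := key
  have hτσ : ρ * σ * ρ⁻¹ * σ = ρ⁻¹ * σ * ρ := by
    calc ρ * σ * ρ⁻¹ * σ = (σ⁻¹ * ρ * σ⁻¹ * ρ⁻¹)⁻¹ := by group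
    _ = (σ * ρ * σ * ρ⁻¹)⁻¹ := by rw [hσinv]
    _ = (ρ⁻¹ * σ * ρ)⁻¹ := by rw [key]
    _ = ρ⁻¹ * σ⁻¹ * ρ := by group
    _ = ρ⁻¹ * σ * ρ := by rw [hσinv]
  have hττ : (ρ * σ * ρ⁻¹) * (ρ * σ * ρ⁻¹) = 1 := by
    calc (ρ * σ * ρ⁻¹) * (ρ * σ * ρ⁻¹) = ρ * (σ * σ) * ρ⁻¹ := by group
    _ = 1 := by rw [hσ1]; group
  have hgts : (ρ * σ * ρ⁻¹) * σ = σ * (ρ * σ * ρ⁻¹) := hτσ.trans hστ.symm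
  have hgrs : ρ * σ = (ρ * σ * ρ⁻¹) * ρ := by group
  have hgrt : ρ * (ρ * σ * ρ⁻¹) = σ * ((ρ * σ * ρ⁻¹) * ρ) := by
    calc ρ * (ρ * σ * ρ⁻¹) = (ρ * ρ) * σ * ρ⁻¹ := by group
    _ = ρ⁻¹ * σ * ρ⁻¹ := by rw [hρρ]
    _ = σ * ρ * σ := hσρσ.symm
    _ = σ * ((ρ * σ * ρ⁻¹) * ρ) := by group
  -- ζ facts
  have hζ3 : ζ ^ 3 = 1 := hζ.pow_eq_one
  have hζne1 : ζ ≠ 1 := hζ.ne_one (by norm_num)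
  have kz2 : ζ * ζ + ζ + 1 = 0 := by
    have h : (ζ - 1) * (ζ * ζ + ζ + 1) = 0 := by linear_combination hζ3
    rcases mul_eq_zero.mp h with h' | h'
    · exact absurd (sub_eq_zero.mp h') hζne1
    · exact h'
  -- algebra-level facts
  set f := algebraMap k (MonoidAlgebra k G) with hf
  set e := MonoidAlgebra.of k G with he
  have hchar : ∀ x : MonoidAlgebra k G, x + x = 0 := fun x => by
    have h2 : (2 : k) = 0 := by
      have := CharP.cast_eq_zero k 2
      exact_mod_cast this
    rw [← two_smul k x, h2, zero_smul]
  have hz2 : f ζ * f ζ + f ζ + 1 = 0 := by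
    have := congrArg f kz2
    simpa using this
  have hzs : e σ * f ζ = f ζ * e σ := (Algebra.commutes ζ (e σ)).symm
  have hzt : e τ * f ζ = f ζ * e τ := (Algebra.commutes ζ (e τ)).symm
  have hzr : e ρ * f ζ = f ζ * e ρ := (Algebra.commutes ζ (e ρ)).symm
  have hss : e σ * e σ = 1 := by rw [← map_mul, hσ1, map_one]
  have htt : e τ * e τ = 1 := by rw [← map_mul, hττ, map_one]
  have hts : e τ * e σ = e σ * e τ := by rw [← map_mul, ← map_mul, hgts]
  have hrr' : e ρ * e ρ⁻¹ = 1 := by rw [← map_mul, mul_inv_cancel, map_one]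
  have hrs : e ρ * e σ = e τ * e ρ := by rw [← map_mul, ← map_mul, hgrs]
  have hrt : e ρ * e τ = e σ * (e τ * e ρ) := by
    rw [← map_mul, ← map_mul, ← map_mul, hgrt]
  obtain ⟨g1, g2, g3, g4, g5, g6⟩ :=
    aux8 (f ζ) (e σ) (e τ) (e ρ) (e ρ⁻¹) hchar hz2 hzs hzt hss htt hts hrr' hrs hrt hzr
  have hCD : C = f ζ * (e σ - 1) + (f ζ) ^ 2 * (e τ - 1) + (e σ - 1) * (e τ - 1)
      ∧ D = (e σ - 1) + (f ζ) ^ 2 * (e τ - 1) + f ζ * ((e σ - 1) * (e τ - 1)) := by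
    constructor <;>
    simp only [C, D, A, B, Algebra.smul_def, map_pow, hf, he]
  rw [hCD.1, hCD.2]
  simp only [A, B, Algebra.smul_def, map_pow, hf, he]
  exact ⟨g1, g2, g3, g4, g5, g6⟩
end

section
/- Let k be an algebraically closed field of characteristic 2, ζ ∈ k a primitive cube root of unity, n ≥ 1 an integer, and φ ∈ k with φ ≠ 1. Let H = ⟨σ, τ⟩ be a Klein four group. Define two 2n-dimensional representations of H over k in block form (blocks of size n): V_φ given by σ ↦ [[I_n, ζ(I_n + J_n(φ))], [0, I_n]] and τ ↦ [[I_n, ζ²I_n + J_n(φ)], [0, I_n]]; and W_λ given by σ ↦ [[I_n, I_n], [0, I_n]] and τ ↦ [[I_n, J_n(λ)], [0, I_n]]. Then V_φ is isomorphic as a representation of H to W_λ for λ = ζ(1 + ζφ)(1 + φ)⁻¹. In particular, V_0 ≅ W_ζ and V_{ζ²} ≅ W_0. -/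
/-!
Both representations send `σ` and `τ` to block unipotent matrices `[[1, X], [0, 1]]`, and
conjugating by `diag(B, C)` replaces `X` by `B⁻¹ X C`. With `a = 1 + φ`, `J = J_n(a)` and
`N = J_n(0)`, the upper blocks of `V_φ` are `X = ζJ` and `Y = λX + ζa⁻¹N`; this is where
`ζ² + ζ + 1 = 0` and characteristic 2 enter. Taking `B = XQ`, `C = Q` turns `X` into `1`, and
turns `Y` into `λ + N = J_n(λ)` exactly when `NQ = aJQN`. Since `T = aJ` commutes with `N`, the
upper triangular matrix `Q` whose `j`-th column is `Tʲeⱼ` does this, and its diagonal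
`a²ʲ` is nonzero because `φ ≠ 1`.
-/

/-- The `n × n` upper-triangular Jordan block over `k` with eigenvalue `lam`. -/
def jordanBlock (k : Type) [Field k] (n : ℕ) (lam : k) : Matrix (Fin n) (Fin n) k :=
  Matrix.of fun i j => if i = j then lam else if (i : ℕ) + 1 = (j : ℕ) then 1 else 0

open Matrix

namespace Matrix

variable {R : Type*} [Semiring R] {m : Type*} [Fintype m] [LinearOrder m]

theorem IsUpperTriangular.mul_apply_self {A B : Matrix m m R} (hA : A.IsUpperTriangular)
    (hB : B.IsUpperTriangular) (i : m) : (A * B) i i = A i i * B i i := by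
  rw [mul_apply, Finset.sum_eq_single i]
  · intro l _ hli
    rcases lt_or_gt_of_ne hli with h | h
    · rw [hA h, zero_mul]
    · rw [hB h, mul_zero]
  · simp

theorem IsUpperTriangular.pow_apply_self [DecidableEq m] {A : Matrix m m R}
    (hA : A.IsUpperTriangular) (e : ℕ) (i : m) : (A ^ e) i i = A i i ^ e := by
  induction e with
  | zero => simp
  | succ e ih =>
    rw [pow_succ, IsUpperTriangular.mul_apply_self (hA.pow e) hA, ih, pow_succ]

end Matrix

section ColumnPow

variable {R : Type*} {n : ℕ}

def columnPowMatrix [Semiring R] (T : Matrix (Fin n) (Fin n) R) : Matrix (Fin n) (Fin n) R :=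
  Matrix.of fun i j => (T ^ (j : ℕ)) i j

theorem mul_columnPowMatrix_apply [Semiring R] (A T : Matrix (Fin n) (Fin n) R) (i j : Fin n) :
    (A * columnPowMatrix T) i j = (A * T ^ (j : ℕ)) i j := by
  simp only [mul_apply, columnPowMatrix, of_apply]

theorem columnPowMatrix_isUpperTriangular [Semiring R] {T : Matrix (Fin n) (Fin n) R}
    (hT : T.IsUpperTriangular) : (columnPowMatrix T).IsUpperTriangular :=
  fun _ j hij => hT.pow j hij

theorem isUnit_det_columnPowMatrix [CommRing R] {T : Matrix (Fin n) (Fin n) R}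
    (hT : T.IsUpperTriangular) (hdiag : ∀ i, IsUnit (T i i)) : IsUnit (columnPowMatrix T).det := by
  rw [det_of_isUpperTriangular (columnPowMatrix_isUpperTriangular hT)]
  refine IsUnit.prod_univ_iff.mpr fun i => ?_
  rw [columnPowMatrix, of_apply, hT.pow_apply_self]
  exact (hdiag i).pow _

end ColumnPow

section JordanBlock

variable {k : Type} [Field k] {n : ℕ}

theorem jordanBlock_eq_smul_one_add (lam : k) :
    jordanBlock k n lam = lam • (1 : Matrix (Fin n) (Fin n) k) + jordanBlock k n 0 := by
  ext i j
  simp only [jordanBlock, Matrix.add_apply, Matrix.smul_apply, one_apply, of_apply]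
  split_ifs <;> simp_all

theorem one_add_jordanBlock (lam : k) : 1 + jordanBlock k n lam = jordanBlock k n (1 + lam) := by
  rw [jordanBlock_eq_smul_one_add lam, jordanBlock_eq_smul_one_add (1 + lam), add_smul, one_smul,
    add_assoc]

theorem jordanBlock_isUpperTriangular (lam : k) : (jordanBlock k n lam).IsUpperTriangular := by
  intro i j hij
  change j < i at hij
  simp only [jordanBlock, of_apply]
  rw [if_neg hij.ne', if_neg (by rw [Fin.lt_def] at hij; omega)]

@[simp]
theorem jordanBlock_apply_self (lam : k) (i : Fin n) : jordanBlock k n lam i i = lam := by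
  simp [jordanBlock]

theorem mul_jordanBlock_zero_apply_of_val_eq_zero (M : Matrix (Fin n) (Fin n) k) (i : Fin n)
    {j : Fin n} (hj : (j : ℕ) = 0) : (M * jordanBlock k n 0) i j = 0 := by
  refine (mul_apply ..).trans (Finset.sum_eq_zero fun l _ => ?_)
  simp [jordanBlock, hj]

theorem mul_jordanBlock_zero_apply_of_val_eq_succ (M : Matrix (Fin n) (Fin n) k) (i : Fin n)
    {j l : Fin n} (hjl : (j : ℕ) = l + 1) : (M * jordanBlock k n 0) i j = M i l := by
  rw [mul_apply, Finset.sum_eq_single l]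
  · simp [jordanBlock, hjl, Fin.ext_iff]
  · intro l' _ hl'
    rw [Ne, Fin.ext_iff] at hl'
    simp only [jordanBlock, of_apply]
    split_ifs <;> first | (exfalso; omega) | simp
  · simp

-- Both sides send `eⱼ` to `Tʲ eⱼ₋₁`.
theorem jordanBlock_zero_mul_columnPowMatrix {T : Matrix (Fin n) (Fin n) k}
    (hT : Commute (jordanBlock k n 0) T) :
    jordanBlock k n 0 * columnPowMatrix T = T * columnPowMatrix T * jordanBlock k n 0 := by
  ext i j
  rw [mul_columnPowMatrix_apply, (hT.pow_right _).eq]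
  rcases Nat.eq_zero_or_eq_succ_pred (j : ℕ) with hj | hj
  · rw [mul_jordanBlock_zero_apply_of_val_eq_zero _ _ hj,
      mul_jordanBlock_zero_apply_of_val_eq_zero _ _ hj]
  · set l : Fin n := ⟨(j : ℕ).pred, by omega⟩
    rw [mul_jordanBlock_zero_apply_of_val_eq_succ _ _ (l := l) hj,
      mul_jordanBlock_zero_apply_of_val_eq_succ _ _ (l := l) hj, mul_columnPowMatrix_apply,
      ← pow_succ', show (l : ℕ) + 1 = j from hj.symm]

end JordanBlock

theorem intertwines_of_closure_eq_top {G M : Type*} [Group G] [Group M] {s : Set G}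
    (hs : Subgroup.closure s = ⊤) {V W : G →* M} {u : M} (hu : ∀ g ∈ s, V g * u = u * W g)
    (g : G) : V g * u = u * W g := by
  have hconj : (MulAut.conj u⁻¹).toMonoidHom.comp V = W :=
    MonoidHom.eq_of_eqOn_dense hs fun g hg => by simp [mul_assoc, hu g hg]
  rw [← hconj]
  simp [mul_assoc]

theorem fromBlocks_one_mul_fromBlocks_diag {R m n : Type*} [Semiring R] [Fintype m]
    [Fintype n] [DecidableEq m] [DecidableEq n] {X Y : Matrix m n R} {B : Matrix m m R}
    {C : Matrix n n R} (h : X * C = B * Y) :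
    fromBlocks 1 X 0 1 * fromBlocks B 0 0 C = fromBlocks B 0 0 C * fromBlocks 1 Y 0 1 := by
  simp [fromBlocks_multiply, h]

theorem smul_one_add_jordanBlock_eq {k : Type} [Field k] {n : ℕ} {ζ φ : k}
    (hζ : ζ ^ 2 + ζ + 1 = 0) (h2 : (2 : k) = 0) (hφ : 1 + φ ≠ 0) :
    ζ ^ 2 • (1 : Matrix (Fin n) (Fin n) k) + jordanBlock k n φ =
      (ζ * (1 + ζ * φ) * (1 + φ)⁻¹) • ζ • jordanBlock k n (1 + φ) +
        (ζ * (1 + φ)⁻¹) • jordanBlock k n 0 := by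
  rw [jordanBlock_eq_smul_one_add φ, jordanBlock_eq_smul_one_add (1 + φ)]
  match_scalars
  · field_simp
    linear_combination (φ - ζ * φ) * hζ
  · field_simp
    linear_combination (φ - ζ * φ - 1) * hζ + h2

theorem smul_jordanBlock_mul_columnPowMatrix {k : Type} [Field k] {n : ℕ} {a : k} (ha : a ≠ 0)
    (c lam : k) :
    (lam • c • jordanBlock k n a + (c * a⁻¹) • jordanBlock k n 0) *
        columnPowMatrix (a • jordanBlock k n a) =
      c • jordanBlock k n a * columnPowMatrix (a • jordanBlock k n a) * jordanBlock k n lam := by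
  have hcomm : Commute (jordanBlock k n 0) (a • jordanBlock k n a) := by
    rw [jordanBlock_eq_smul_one_add a]
    exact (((Commute.one_right _).smul_right a).add_right (Commute.refl _)).smul_right a
  rw [add_mul, smul_mul_assoc (c * a⁻¹), jordanBlock_zero_mul_columnPowMatrix hcomm,
    jordanBlock_eq_smul_one_add lam, mul_add, mul_smul_one]
  simp only [smul_mul_assoc, Matrix.mul_assoc, smul_smul, inv_mul_cancel_right₀ ha]

theorem stmt_10_general (k : Type) [Field k] [CharP k 2]
    (ζ : k) (hζ : IsPrimitiveRoot ζ 3)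
    (n : ℕ) (φ : k) (hφ : φ ≠ 1)
    (H : Type) [Group H] (σ τ : H)
    (hgen : Subgroup.closure {σ, τ} = (⊤ : Subgroup H))
    (V W : H →* Matrix.GeneralLinearGroup (Fin n ⊕ Fin n) k)
    (hVσ : (V σ : Matrix (Fin n ⊕ Fin n) (Fin n ⊕ Fin n) k) =
      Matrix.fromBlocks 1 (ζ • (1 + jordanBlock k n φ)) 0 1)
    (hVτ : (V τ : Matrix (Fin n ⊕ Fin n) (Fin n ⊕ Fin n) k) =
      Matrix.fromBlocks 1 (ζ ^ 2 • (1 : Matrix (Fin n) (Fin n) k) + jordanBlock k n φ) 0 1)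
    (hWσ : (W σ : Matrix (Fin n ⊕ Fin n) (Fin n ⊕ Fin n) k) =
      Matrix.fromBlocks 1 1 0 1)
    (hWτ : (W τ : Matrix (Fin n ⊕ Fin n) (Fin n ⊕ Fin n) k) =
      Matrix.fromBlocks 1 (jordanBlock k n (ζ * (1 + ζ * φ) * (1 + φ)⁻¹)) 0 1) :
    ∃ P : Matrix.GeneralLinearGroup (Fin n ⊕ Fin n) k,
      ∀ h : H, P * V h * P⁻¹ = W h := by
  have h2 : (2 : k) = 0 := CharP.cast_eq_zero k 2
  have hζ0 : ζ ≠ 0 := hζ.ne_zero (by norm_num)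
  have hζsum : ζ ^ 2 + ζ + 1 = 0 := by
    have := hζ.geom_sum_eq_zero (by norm_num)
    simp only [Finset.sum_range_succ, Finset.sum_range_zero] at this
    linear_combination this
  have ha : 1 + φ ≠ 0 := fun h => hφ (by linear_combination h - h2)
  set J := jordanBlock k n (1 + φ)
  set Q := columnPowMatrix ((1 + φ) • J)
  have hJ : J.IsUpperTriangular := jordanBlock_isUpperTriangular _
  have hQ : IsUnit Q.det :=
    isUnit_det_columnPowMatrix (fun i j h => by simp [hJ h]) fun i => by simp [J, ha]
  have hR : IsUnit (fromBlocks (ζ • J * Q) 0 0 Q).det := by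
    rw [det_fromBlocks_zero₂₁, det_mul, det_smul, det_of_isUpperTriangular hJ]
    simp [J, hζ0, ha, hQ.ne_zero]
  set u := nonsingInvUnit _ hR
  have hgens : ∀ g ∈ ({σ, τ} : Set H), V g * u = u * W g := by
    rintro g (rfl | rfl) <;> ext1 <;> rw [Units.val_mul, Units.val_mul]
    · rw [hVσ, hWσ, one_add_jordanBlock]
      exact fromBlocks_one_mul_fromBlocks_diag (mul_one _).symm
    · rw [hVτ, hWτ, smul_one_add_jordanBlock_eq hζsum h2 ha]
      exact fromBlocks_one_mul_fromBlocks_diag (smul_jordanBlock_mul_columnPowMatrix ha _ _)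
  exact ⟨u⁻¹, fun h => by
    rw [inv_inv, mul_assoc, intertwines_of_closure_eq_top hgen hgens h, inv_mul_cancel_left]⟩

/-- **Lemma.** For the Klein four group `H = ⟨σ, τ⟩` over an algebraically closed field
`k` of characteristic 2 with primitive cube root of unity `ζ`, and `φ ≠ 1`, the
representation `V_φ` (given on `σ, τ` by the stated block matrices) is isomorphic to
`W_λ` with `λ = ζ(1 + ζφ)(1 + φ)⁻¹`. -/
theorem stmt_10 (k : Type) [Field k] [IsAlgClosed k] [CharP k 2]
    (ζ : k) (hζ : IsPrimitiveRoot ζ 3)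
    (n : ℕ) (hn : 1 ≤ n) (φ : k) (hφ : φ ≠ 1)
    (H : Type) [Group H] (σ τ : H)
    (hσ1 : σ ≠ 1) (hτ1 : τ ≠ 1) (hστ : σ ≠ τ)
    (hσ : σ ^ 2 = 1) (hτ : τ ^ 2 = 1) (hcomm : σ * τ = τ * σ)
    (hgen : Subgroup.closure {σ, τ} = (⊤ : Subgroup H))
    (V W : H →* Matrix.GeneralLinearGroup (Fin n ⊕ Fin n) k)
    (hVσ : (V σ : Matrix (Fin n ⊕ Fin n) (Fin n ⊕ Fin n) k) =
      Matrix.fromBlocks 1 (ζ • (1 + jordanBlock k n φ)) 0 1)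
    (hVτ : (V τ : Matrix (Fin n ⊕ Fin n) (Fin n ⊕ Fin n) k) =
      Matrix.fromBlocks 1 (ζ ^ 2 • (1 : Matrix (Fin n) (Fin n) k) + jordanBlock k n φ) 0 1)
    (hWσ : (W σ : Matrix (Fin n ⊕ Fin n) (Fin n ⊕ Fin n) k) =
      Matrix.fromBlocks 1 1 0 1)
    (hWτ : (W τ : Matrix (Fin n ⊕ Fin n) (Fin n ⊕ Fin n) k) =
      Matrix.fromBlocks 1 (jordanBlock k n (ζ * (1 + ζ * φ) * (1 + φ)⁻¹)) 0 1) :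
    ∃ P : Matrix.GeneralLinearGroup (Fin n ⊕ Fin n) k,
      ∀ h : H, P * V h * P⁻¹ = W h :=
  stmt_10_general k ζ hζ n φ hφ H σ τ hgen V W hVσ hVτ hWσ hWτ
end

section
/- Let k be an algebraically closed field of characteristic 2 and ζ ∈ k a primitive cube root of unity. Let G = A₄ = ⟨σ, ρ : σ² = ρ³ = (σρ)³ = 1⟩, set τ := ρσρ⁻¹, and let H = ⟨σ, τ⟩ be the unique Sylow 2-subgroup of G. For n ≥ 1 let E = [I_n | 0] and F = [0 | I_n] be the two n×(n+1) matrices over k consisting of the identity matrix followed by a zero column, respectively a zero column followed by the identity matrix, and let M be the (2n+1)-dimensional representation of H over k given in block form (on k^n ⊕ k^{n+1}) by σ ↦ [[I_n, ζ(E + F)], [0, I_{n+1}]] and τ ↦ [[I_n, E + ζ²F], [0, I_{n+1}]]. Then there exist representations W₀, W₁, W₂ of G over k such that Ind_H^G M ≅ W₀ ⊕ W₁ ⊕ W₂ as representations of G, and Res_H^G W_i ≅ M as representations of H for each i = 0, 1, 2. -/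
/-- The `n × (n+1)` matrix `E = [Iₙ | 0]` (identity followed by a zero column). -/
def matE (k : Type) [Field k] (n : ℕ) : Matrix (Fin n) (Fin (n + 1)) k :=
  Matrix.of fun i j => if (i : ℕ) = (j : ℕ) then 1 else 0

/-- The `n × (n+1)` matrix `F = [0 | Iₙ]` (a zero column followed by the identity). -/
def matF (k : Type) [Field k] (n : ℕ) : Matrix (Fin n) (Fin (n + 1)) k :=
  Matrix.of fun i j => if (i : ℕ) + 1 = (j : ℕ) then 1 else 0

namespace Stmt15Aux
open Matrix

variable (k : Type) [Field k] (ζ : k) (n : ℕ)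

/-- the matrix `A` (extension of `M` to `ρ`), block diagonal. -/
def mA : Matrix (Fin n ⊕ Fin (n + 1)) (Fin n ⊕ Fin (n + 1)) k :=
  fromBlocks (diagonal fun i : Fin n => ζ ^ (i : ℕ)) 0 0
    (diagonal fun j : Fin (n + 1) => ζ ^ ((j : ℕ) + 1))

/-- the inverse matrix `A⁻¹`. -/
def mA' : Matrix (Fin n ⊕ Fin (n + 1)) (Fin n ⊕ Fin (n + 1)) k :=
  fromBlocks (diagonal fun i : Fin n => ζ ^ (2 * (i : ℕ))) 0 0
    (diagonal fun j : Fin (n + 1) => ζ ^ (2 * ((j : ℕ) + 1)))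

def mSσ : Matrix (Fin n ⊕ Fin (n + 1)) (Fin n ⊕ Fin (n + 1)) k :=
  fromBlocks 1 (ζ • (matE k n + matF k n)) 0 1

def mSτ : Matrix (Fin n ⊕ Fin (n + 1)) (Fin n ⊕ Fin (n + 1)) k :=
  fromBlocks 1 (matE k n + ζ ^ 2 • matF k n) 0 1

variable {k ζ n}
variable (hζ3 : ζ ^ 3 = 1) (h2 : (2 : k) = 0) (hsum : 1 + ζ + ζ ^ 2 = 0)

section
include hζ3

theorem mA_mul_mA' : mA k ζ n * mA' k ζ n = 1 := by
  rw [mA, mA', fromBlocks_multiply]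
  simp only [Matrix.mul_zero, Matrix.zero_mul, add_zero, zero_add, diagonal_mul_diagonal]
  have e1 : (fun i : Fin n => ζ ^ (i : ℕ) * ζ ^ (2 * (i : ℕ))) = fun _ => (1 : k) := by
    funext i
    rw [← pow_add]
    have h : (i : ℕ) + 2 * (i : ℕ) = 3 * (i : ℕ) := by ring
    rw [h, pow_mul, hζ3, one_pow]
  have e2 : (fun j : Fin (n+1) => ζ ^ ((j : ℕ) + 1) * ζ ^ (2 * ((j : ℕ) + 1))) = fun _ => (1 : k) := by
    funext j
    rw [← pow_add]
    have h : ((j : ℕ) + 1) + 2 * ((j : ℕ) + 1) = 3 * ((j : ℕ) + 1) := by ring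
    rw [h, pow_mul, hζ3, one_pow]
  rw [e1, e2, diagonal_one, diagonal_one, fromBlocks_one]

theorem mA'_mul_mA : mA' k ζ n * mA k ζ n = 1 := by
  rw [mA, mA', fromBlocks_multiply]
  simp only [Matrix.mul_zero, Matrix.zero_mul, add_zero, zero_add, diagonal_mul_diagonal]
  have e1 : (fun i : Fin n => ζ ^ (2 * (i : ℕ)) * ζ ^ (i : ℕ)) = fun _ => (1 : k) := by
    funext i
    rw [← pow_add]
    have h : 2 * (i : ℕ) + (i : ℕ) = 3 * (i : ℕ) := by ring
    rw [h, pow_mul, hζ3, one_pow]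
  have e2 : (fun j : Fin (n+1) => ζ ^ (2 * ((j : ℕ) + 1)) * ζ ^ ((j : ℕ) + 1)) = fun _ => (1 : k) := by
    funext j
    rw [← pow_add]
    have h : 2 * ((j : ℕ) + 1) + ((j : ℕ) + 1) = 3 * ((j : ℕ) + 1) := by ring
    rw [h, pow_mul, hζ3, one_pow]
  rw [e1, e2, diagonal_one, diagonal_one, fromBlocks_one]

theorem mA'_sq : mA' k ζ n * mA' k ζ n = mA k ζ n := by
  rw [mA, mA', fromBlocks_multiply]
  simp only [Matrix.mul_zero, Matrix.zero_mul, add_zero, zero_add, diagonal_mul_diagonal]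
  have e1 : (fun i : Fin n => ζ ^ (2 * (i : ℕ)) * ζ ^ (2 * (i : ℕ))) = fun i : Fin n => ζ ^ (i : ℕ) := by
    funext i
    rw [← pow_add]
    have h : 2 * (i : ℕ) + 2 * (i : ℕ) = 3 * (i : ℕ) + (i : ℕ) := by ring
    rw [h, pow_add, pow_mul, hζ3, one_pow, one_mul]
  have e2 : (fun j : Fin (n+1) => ζ ^ (2 * ((j : ℕ) + 1)) * ζ ^ (2 * ((j : ℕ) + 1)))
      = fun j : Fin (n+1) => ζ ^ ((j : ℕ) + 1) := by
    funext j
    rw [← pow_add]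
    have h : 2 * ((j : ℕ) + 1) + 2 * ((j : ℕ) + 1) = 3 * ((j : ℕ) + 1) + ((j : ℕ) + 1) := by ring
    rw [h, pow_add, pow_mul, hζ3, one_pow, one_mul]
  rw [e1, e2]

theorem mA_sq : mA k ζ n * mA k ζ n = mA' k ζ n := by
  rw [mA, mA', fromBlocks_multiply]
  simp only [Matrix.mul_zero, Matrix.zero_mul, add_zero, zero_add, diagonal_mul_diagonal]
  have e1 : (fun i : Fin n => ζ ^ (i : ℕ) * ζ ^ (i : ℕ)) = fun i : Fin n => ζ ^ (2 * (i : ℕ)) := by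
    funext i
    rw [← pow_add]
    congr 1
    ring
  have e2 : (fun j : Fin (n+1) => ζ ^ ((j : ℕ) + 1) * ζ ^ ((j : ℕ) + 1))
      = fun j : Fin (n+1) => ζ ^ (2 * ((j : ℕ) + 1)) := by
    funext j
    rw [← pow_add]
    congr 1
    ring
  rw [e1, e2]

theorem blk_c2 : (matE k n + ζ ^ 2 • matF k n) * (diagonal fun j : Fin (n+1) => ζ ^ ((j : ℕ) + 1))
    = (diagonal fun i : Fin n => ζ ^ (i : ℕ)) * (ζ • (matE k n + matF k n)) := by
  ext i j
  simp only [mul_diagonal, diagonal_mul, matE, matF, Matrix.add_apply, Matrix.smul_apply,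
    Matrix.of_apply, smul_eq_mul]
  split_ifs with h1 h2 h2 <;> first
  | omega
  | ring1
  | (rw [h1]; ring1)
  | (rw [← h2, hζ3]; ring)
  | (rw [← h2]; linear_combination (ζ ^ (i : ℕ) * ζ) * hζ3)

theorem mc2 : mSτ k ζ n * mA k ζ n = mA k ζ n * mSσ k ζ n := by
  rw [mSτ, mSσ, mA, fromBlocks_multiply, fromBlocks_multiply]
  simp only [Matrix.one_mul, Matrix.mul_one, Matrix.zero_mul, Matrix.mul_zero, add_zero, zero_add]
  rw [blk_c2 hζ3]

theorem blk_c3 : (ζ • (matE k n + matF k n)) * (diagonal fun j : Fin (n+1) => ζ ^ (2 * ((j : ℕ) + 1)))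
    = (diagonal fun i : Fin n => ζ ^ (2 * (i : ℕ))) * (matE k n + ζ ^ 2 • matF k n) := by
  ext i j
  simp only [mul_diagonal, diagonal_mul, matE, matF, Matrix.add_apply, Matrix.smul_apply,
    Matrix.of_apply, smul_eq_mul]
  split_ifs with h1 h2 h2 <;> first
  | omega
  | ring1
  | (rw [← h1]; linear_combination (ζ ^ (2 * (i : ℕ))) * hζ3)
  | (rw [← h2]; linear_combination (ζ ^ (2 * (i : ℕ)) * ζ ^ 2) * hζ3)

theorem mc3 : mSσ k ζ n * mA' k ζ n = mA' k ζ n * mSτ k ζ n := by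
  rw [mSτ, mSσ, mA', fromBlocks_multiply, fromBlocks_multiply]
  simp only [Matrix.one_mul, Matrix.mul_one, Matrix.zero_mul, Matrix.mul_zero, add_zero, zero_add]
  rw [blk_c3 hζ3]

theorem mSστ : mSσ k ζ n * mSτ k ζ n
    = fromBlocks 1 ((matE k n + ζ ^ 2 • matF k n) + ζ • (matE k n + matF k n)) 0 1 := by
  rw [mSτ, mSσ, fromBlocks_multiply]
  simp only [Matrix.one_mul, Matrix.mul_one, Matrix.zero_mul, Matrix.mul_zero, add_zero, zero_add]

include h2 hsum

theorem blk_c1 : ((matE k n + ζ ^ 2 • matF k n) + ζ • (matE k n + matF k n))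
      * (diagonal fun j : Fin (n+1) => ζ ^ (2 * ((j : ℕ) + 1)))
    = (diagonal fun i : Fin n => ζ ^ (2 * (i : ℕ))) * (ζ • (matE k n + matF k n)) := by
  ext i j
  simp only [mul_diagonal, diagonal_mul, matE, matF, Matrix.add_apply, Matrix.smul_apply,
    Matrix.of_apply, smul_eq_mul]
  split_ifs with h1 hb hb <;> first
  | omega
  | ring1
  | (rw [← h1]
     linear_combination (ζ ^ (i : ℕ))^2 * hζ3 + (ζ ^ (i : ℕ))^2 * hsum - (ζ ^ (i : ℕ))^2 * ζ * h2)
  | (rw [← hb]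
     linear_combination ((ζ ^ (i : ℕ))^2 * (ζ^3 + ζ^2 + 1)) * hζ3 + (ζ ^ (i : ℕ))^2 * hsum
       - (ζ ^ (i : ℕ))^2 * ζ * h2)

theorem mc1 : (mSσ k ζ n * mSτ k ζ n) * mA' k ζ n = mA' k ζ n * mSσ k ζ n := by
  rw [mSστ, mSσ, mA', fromBlocks_multiply, fromBlocks_multiply]
  simp only [Matrix.one_mul, Matrix.mul_one, Matrix.zero_mul, Matrix.mul_zero, add_zero, zero_add]
  rw [blk_c1 (hζ3 := hζ3) (h2 := h2) (hsum := hsum)]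
  exact hζ3

theorem blk_c4 : ((matE k n + ζ ^ 2 • matF k n) + ζ • (matE k n + matF k n))
      * (diagonal fun j : Fin (n+1) => ζ ^ ((j : ℕ) + 1))
    = (diagonal fun i : Fin n => ζ ^ (i : ℕ)) * (matE k n + ζ ^ 2 • matF k n) := by
  ext i j
  simp only [mul_diagonal, diagonal_mul, matE, matF, Matrix.add_apply, Matrix.smul_apply,
    Matrix.of_apply, smul_eq_mul]
  split_ifs with h1 hb hb <;> first
  | omega
  | ring1
  | (rw [← h1]
     linear_combination (ζ ^ (i : ℕ)) * hsum - (ζ ^ (i : ℕ)) * h2)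
  | (rw [← hb]
     linear_combination (ζ ^ (i : ℕ) * (ζ + 1)) * hζ3 + (ζ ^ (i : ℕ)) * hsum
       - (ζ ^ (i : ℕ)) * ζ^2 * h2)

theorem mc4 : (mSσ k ζ n * mSτ k ζ n) * mA k ζ n = mA k ζ n * mSτ k ζ n := by
  rw [mSστ, mSτ, mA, fromBlocks_multiply, fromBlocks_multiply]
  simp only [Matrix.one_mul, Matrix.mul_one, Matrix.zero_mul, Matrix.mul_zero, add_zero, zero_add]
  rw [blk_c4 (hζ3 := hζ3) (h2 := h2) (hsum := hsum)]
  exact hζ3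

end
end Stmt15Aux


open Stmt15Aux in
set_option maxHeartbeats 1600000 in
/-- **Lemma.** Let `G = A₄ = ⟨σ, ρ⟩`, `τ = ρσρ⁻¹`, `H = ⟨σ, τ⟩` its Sylow 2-subgroup,
and let `M` be the `(2n+1)`-dimensional representation of `H` given by
`σ ↦ [[Iₙ, ζ(E + F)], [0, Iₙ₊₁]]` and `τ ↦ [[Iₙ, E + ζ²F], [0, Iₙ₊₁]]`.  Then the
induced representation `Ind_H^G M` — encoded by a `G`-representation `U` with an
injective `H`-equivariant embedding of `M` whose three `ρ`-translates form an internal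
direct sum — decomposes as `W₀ ⊕ W₁ ⊕ W₂` for `G`-representations `W₀, W₁, W₂` each of
whose restrictions to `H` is isomorphic to `M`. -/
theorem stmt_15 (k : Type) [Field k] [IsAlgClosed k] [CharP k 2]
    (ζ : k) (hζ : IsPrimitiveRoot ζ 3)
    (G : Type) [Group G] (σ ρ : G)
    (hσ : σ ^ 2 = 1) (hρ : ρ ^ 3 = 1) (hσρ : (σ * ρ) ^ 3 = 1)
    (hcard : Nat.card G = 12) (hgen : Subgroup.closure {σ, ρ} = ⊤)
    (τ : G) (hτ : τ = ρ * σ * ρ⁻¹)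
    (H : Subgroup G) (hH : H = Subgroup.closure {σ, τ})
    (hσH : σ ∈ H) (hτH : τ ∈ H)
    (n : ℕ) (hn : 1 ≤ n)
    -- the (2n+1)-dimensional representation M of H
    (M : Representation k ↥H (Fin n ⊕ Fin (n + 1) → k))
    (hMσ : M ⟨σ, hσH⟩ =
      Matrix.toLin' (Matrix.fromBlocks 1 (ζ • (matE k n + matF k n)) 0 1))
    (hMτ : M ⟨τ, hτH⟩ =
      Matrix.toLin' (Matrix.fromBlocks 1 (matE k n + ζ ^ 2 • matF k n) 0 1))
    -- a G-representation U realizing Ind_H^G M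
    (W : Type) [AddCommGroup W] [Module k W]
    (U : Representation k G W)
    (ι : (Fin n ⊕ Fin (n + 1) → k) →ₗ[k] W)
    (hinj : Function.Injective ι)
    (hequiv : ∀ (h : ↥H) (v : Fin n ⊕ Fin (n + 1) → k), ι (M h v) = U (h : G) (ι v))
    (hint : DirectSum.IsInternal fun i : Fin 3 =>
      Submodule.map (U ρ ^ (i : ℕ)) (LinearMap.range ι)) :
    -- conclusion: Ind_H^G M ≅ W₀ ⊕ W₁ ⊕ W₂ with Res_H^G Wᵢ ≅ M
    ∃ Wr : Fin 3 → Representation k G (Fin n ⊕ Fin (n + 1) → k),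
      (∃ e : W ≃ₗ[k] (Fin 3 → (Fin n ⊕ Fin (n + 1) → k)),
        ∀ (g : G) (w : W) (i : Fin 3), e (U g w) i = Wr i g (e w i)) ∧
      ∀ i : Fin 3,
        ∃ e' : (Fin n ⊕ Fin (n + 1) → k) ≃ₗ[k] (Fin n ⊕ Fin (n + 1) → k),
          ∀ (h : ↥H) (v : Fin n ⊕ Fin (n + 1) → k),
            e' (Wr i (h : G) v) = M h (e' v) := by
  classical
  -- scalar facts
  have h2 : (2 : k) = 0 := by exact_mod_cast CharP.cast_eq_zero k 2
  have hζ3 : ζ ^ 3 = 1 := hζ.pow_eq_one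
  have hζne1 : ζ ≠ 1 := hζ.ne_one (by norm_num)
  have hsum : 1 + ζ + ζ ^ 2 = 0 := by
    have h0 : (ζ - 1) * (1 + ζ + ζ ^ 2) = 0 := by linear_combination hζ3
    rcases mul_eq_zero.mp h0 with h | h
    · exact absurd (sub_eq_zero.mp h) hζne1
    · exact h
  have hζ3i : ∀ m : ℕ, ζ ^ (3 * m) = 1 := fun m => by rw [pow_mul, hζ3, one_pow]
  -- group facts
  have hσ2 : σ * σ = 1 := by rw [← pow_two]; exact hσ
  have hρ3 : ρ * (ρ * ρ) = 1 := by
    have h' := hρ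
    rw [pow_succ, pow_two, mul_assoc] at h'
    exact h'
  have hρinv : ρ⁻¹ = ρ * ρ := by
    have := inv_eq_of_mul_eq_one_right hρ3
    rw [this]
  have hσinv : σ⁻¹ = σ := inv_eq_of_mul_eq_one_right hσ2
  have key1 : σ * ρ * (σ * ρ) = ρ * ρ * σ := by
    have h' : (σ * ρ) * ((σ * ρ) * (σ * ρ)) = 1 := by
      have h0 := hσρ
      rw [pow_succ, pow_two, mul_assoc] at h0
      exact h0
    have h'' : (σ * ρ) * (σ * ρ) = (σ * ρ)⁻¹ := (mul_eq_one_iff_inv_eq.mp h').symm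
    rw [h'', mul_inv_rev, hρinv, hσinv]
  have g2 : σ * ρ = ρ * (σ * τ) := by
    rw [hτ, hρinv]
    calc σ * ρ = (ρ * (ρ * ρ)) * (σ * ρ) := by rw [hρ3, one_mul]
      _ = ρ * ((ρ * ρ * σ) * ρ) := by group
      _ = ρ * ((σ * ρ * (σ * ρ)) * ρ) := by rw [key1]
      _ = ρ * (σ * (ρ * σ * (ρ * ρ))) := by group
  have g3 : τ * ρ = ρ * σ := by rw [hτ]; group
  have g4 : σ * (ρ * ρ) = ρ * (ρ * τ) := by
    rw [hτ, hρinv]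
    calc σ * (ρ * ρ) = (ρ * (ρ * ρ)) * (σ * (ρ * ρ)) := by rw [hρ3, one_mul]
      _ = ρ * (ρ * (ρ * σ * (ρ * ρ))) := by group
  have g5 : τ * (ρ * ρ) = ρ * (ρ * (σ * τ)) := by
    rw [hτ, hρinv]
    calc ρ * σ * (ρ * ρ) * (ρ * ρ) = (ρ * σ * ρ) * (ρ * (ρ * ρ)) := by group
      _ = ρ * (σ * ρ) := by rw [hρ3, mul_one, mul_assoc]
      _ = (ρ * (ρ * ρ)) * (ρ * (σ * ρ)) := by rw [hρ3, one_mul]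
      _ = (ρ * ρ) * ((σ * ρ * (σ * ρ)) * ρ) := by rw [key1]; group
      _ = ρ * (ρ * (σ * (ρ * σ * (ρ * ρ)))) := by group
  -- abbreviations for the matrices as linear maps
  obtain ⟨B, hB⟩ : ∃ B, B = Matrix.toLin' (mA' k ζ n) := ⟨_, rfl⟩
  obtain ⟨Am, hAm⟩ : ∃ Am, Am = Matrix.toLin' (mA k ζ n) := ⟨_, rfl⟩
  obtain ⟨Sσl, hSσl⟩ : ∃ S, S = M ⟨σ, hσH⟩ := ⟨_, rfl⟩
  obtain ⟨Sτl, hSτl⟩ : ∃ S, S = M ⟨τ, hτH⟩ := ⟨_, rfl⟩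
  have hMσ' : Sσl = Matrix.toLin' (mSσ k ζ n) := by rw [hSσl]; exact hMσ
  have hMτ' : Sτl = Matrix.toLin' (mSτ k ζ n) := by rw [hSτl]; exact hMτ
  have hBA : ∀ v, B (Am v) = v := by
    intro v
    rw [hB, hAm, ← Matrix.toLin'_mul_apply, mA'_mul_mA hζ3, Matrix.toLin'_one, LinearMap.id_apply]
  have hAB : ∀ v, Am (B v) = v := by
    intro v
    rw [hB, hAm, ← Matrix.toLin'_mul_apply, mA_mul_mA' hζ3, Matrix.toLin'_one, LinearMap.id_apply]
  have hBB : ∀ v, B (B v) = Am v := by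
    intro v
    rw [hB, hAm, ← Matrix.toLin'_mul_apply, mA'_sq hζ3]
  have hAA : ∀ v, Am (Am v) = B v := by
    intro v
    rw [hB, hAm, ← Matrix.toLin'_mul_apply, mA_sq (hζ3 := hζ3)]
  have hP1 : ∀ v, Sσl (Sτl (B v)) = B (Sσl v) := by
    intro v
    rw [hMσ', hMτ', hB]
    simp only [← Matrix.toLin'_mul_apply]
    rw [← Matrix.mul_assoc, mc1 (hζ3 := hζ3) (h2 := h2) (hsum := hsum)]
  have hP2 : ∀ v, Sτl (Am v) = Am (Sσl v) := by
    intro v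
    rw [hMσ', hMτ', hAm]
    simp only [← Matrix.toLin'_mul_apply]
    rw [mc2 (hζ3 := hζ3)]
  have hP3 : ∀ v, Sσl (B v) = B (Sτl v) := by
    intro v
    rw [hMσ', hMτ', hB]
    simp only [← Matrix.toLin'_mul_apply]
    rw [mc3 (hζ3 := hζ3)]
  have hP4 : ∀ v, Sσl (Sτl (Am v)) = Am (Sτl v) := by
    intro v
    rw [hMσ', hMτ', hAm]
    simp only [← Matrix.toLin'_mul_apply]
    rw [← Matrix.mul_assoc, mc4 (hζ3 := hζ3) (h2 := h2) (hsum := hsum)]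
  -- H-equivariance facts
  have hστH : σ * τ ∈ H := mul_mem hσH hτH
  have hMστ : ∀ v, M ⟨σ * τ, hστH⟩ v = Sσl (Sτl v) := by
    intro v
    have he : (⟨σ * τ, hστH⟩ : ↥H) = ⟨σ, hσH⟩ * ⟨τ, hτH⟩ := rfl
    rw [he, map_mul, hSσl, hSτl]
    rfl
  have hUσ : ∀ v, U σ (ι v) = ι (Sσl v) := fun v => by
    rw [hSσl]; exact (hequiv ⟨σ, hσH⟩ v).symm
  have hUτ : ∀ v, U τ (ι v) = ι (Sτl v) := fun v => by
    rw [hSτl]; exact (hequiv ⟨τ, hτH⟩ v).symm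
  have hUστ : ∀ v, U (σ * τ) (ι v) = ι (Sσl (Sτl v)) := by
    intro v
    rw [← hMστ]
    exact (hequiv ⟨σ * τ, hστH⟩ v).symm
  -- U-power facts
  have hr3 : ∀ x, U ρ (U ρ (U ρ x)) = x := by
    intro x
    have h1 : U ρ * (U ρ * U ρ) = 1 := by rw [← map_mul, ← map_mul, hρ3, map_one]
    calc U ρ (U ρ (U ρ x)) = (U ρ * (U ρ * U ρ)) x := rfl
      _ = x := by rw [h1]; rfl
  have hcσ1 : ∀ x, U σ (U ρ x) = U ρ (U (σ * τ) x) := by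
    intro x
    calc U σ (U ρ x) = U (σ * ρ) x := by rw [map_mul]; rfl
      _ = U (ρ * (σ * τ)) x := by rw [g2]
      _ = U ρ (U (σ * τ) x) := by rw [map_mul]; rfl
  have hcσ2 : ∀ x, U σ (U ρ (U ρ x)) = U ρ (U ρ (U τ x)) := by
    intro x
    calc U σ (U ρ (U ρ x)) = U (σ * (ρ * ρ)) x := by rw [map_mul, map_mul]; rfl
      _ = U (ρ * (ρ * τ)) x := by rw [g4]
      _ = U ρ (U ρ (U τ x)) := by rw [map_mul, map_mul]; rfl
  have hcτ1 : ∀ x, U τ (U ρ x) = U ρ (U σ x) := by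
    intro x
    calc U τ (U ρ x) = U (τ * ρ) x := by rw [map_mul]; rfl
      _ = U (ρ * σ) x := by rw [g3]
      _ = U ρ (U σ x) := by rw [map_mul]; rfl
  have hcτ2 : ∀ x, U τ (U ρ (U ρ x)) = U ρ (U ρ (U (σ * τ) x)) := by
    intro x
    calc U τ (U ρ (U ρ x)) = U (τ * (ρ * ρ)) x := by rw [map_mul, map_mul]; rfl
      _ = U (ρ * (ρ * (σ * τ))) x := by rw [g5]
      _ = U ρ (U ρ (U (σ * τ) x)) := by rw [map_mul, map_mul, map_mul]; rfl
  obtain ⟨φ, hφ⟩ : ∃ φ : Fin 3 → ((Fin n ⊕ Fin (n + 1) → k) →ₗ[k] W),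
      ∀ i v, φ i v = ι v + ζ ^ (i : ℕ) • U ρ (ι (B v))
        + ζ ^ (2 * (i : ℕ)) • U ρ (U ρ (ι (B (B v)))) :=
    ⟨fun i => ι + ζ ^ (i : ℕ) • ((U ρ) ∘ₗ (ι ∘ₗ B))
        + ζ ^ (2 * (i : ℕ)) • ((U ρ) ∘ₗ ((U ρ) ∘ₗ (ι ∘ₗ (B ∘ₗ B)))), fun i v => rfl⟩
  have hLσ : ∀ i v, U σ (φ i v) = φ i (Sσl v) := by
    intro i v
    rw [hφ, hφ, map_add, map_add, map_smul, map_smul, hUσ, hcσ1, hUστ, hP1, hcσ2, hUτ, hBB, hP2,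
      ← hBB]
  have hLτ : ∀ i v, U τ (φ i v) = φ i (Sτl v) := by
    intro i v
    rw [hφ, hφ, map_add, map_add, map_smul, map_smul, hUτ, hcτ1, hUσ, hP3, hcτ2, hUστ, hBB, hP4,
      ← hBB]
  have hLρ : ∀ i v, U ρ (φ i v) = φ i (ζ ^ (2 * (i : ℕ)) • Am v) := by
    intro i v
    rw [hφ, hφ, map_add, map_add, map_smul, map_smul, hr3]
    simp only [map_smul, smul_smul]
    rw [hBB, hBB, hAA, hBA]
    match_scalars
    · linear_combination -hζ3i (i : ℕ)
    · linear_combination -(ζ ^ (i : ℕ)) * hζ3i (i : ℕ)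
    · ring
  obtain ⟨Φ, hΦ⟩ : ∃ Φ : (Fin 3 → (Fin n ⊕ Fin (n + 1) → k)) →ₗ[k] W,
      ∀ f, Φ f = φ 0 (f 0) + φ 1 (f 1) + φ 2 (f 2) :=
    ⟨(φ 0) ∘ₗ LinearMap.proj 0 + (φ 1) ∘ₗ LinearMap.proj 1 + (φ 2) ∘ₗ LinearMap.proj 2,
      fun f => rfl⟩
  have hv0 : ((0 : Fin 3) : ℕ) = 0 := rfl
  have hv1 : ((1 : Fin 3) : ℕ) = 1 := rfl
  have hv2 : ((2 : Fin 3) : ℕ) = 2 := rfl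
  have hΦg : ∀ f : Fin 3 → (Fin n ⊕ Fin (n + 1) → k),
      Φ f = ι (f 0 + f 1 + f 2) + U ρ (ι (B (f 0 + ζ • f 1 + ζ ^ 2 • f 2)))
        + U ρ (U ρ (ι (B (B (f 0 + ζ ^ 2 • f 1 + ζ ^ 4 • f 2))))) := by
    intro f
    rw [hΦ, hφ, hφ, hφ, hv0, hv1, hv2]
    simp only [map_add, map_smul, smul_smul]
    match_scalars <;> ring
  -- injectivity
  have hι0 : ∀ x, ι x = 0 → x = 0 := fun x hx => hinj (by rw [hx, map_zero])
  have hr0 : ∀ x : W, U ρ x = 0 → x = 0 := by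
    intro x hx
    have h' := hr3 x
    rw [hx, map_zero, map_zero] at h'
    exact h'.symm
  have hB0 : ∀ x, B x = 0 → x = 0 := by
    intro x hx
    have h' := hAB x
    rw [hx, map_zero] at h'
    exact h'.symm
  have hzero : ∀ u0 u1 u2 : Fin n ⊕ Fin (n + 1) → k,
      ι u0 + U ρ (ι u1) + U ρ (U ρ (ι u2)) = 0 →
      ι u0 = 0 ∧ U ρ (ι u1) = 0 ∧ U ρ (U ρ (ι u2)) = 0 := by
    intro u0 u1 u2 hs
    have m0 : ι u0 ∈ Submodule.map (U ρ ^ ((0 : Fin 3) : ℕ)) (LinearMap.range ι) :=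
      Submodule.mem_map.mpr ⟨ι u0, LinearMap.mem_range_self ι u0, by rw [hv0, pow_zero]; rfl⟩
    have m1 : U ρ (ι u1) ∈ Submodule.map (U ρ ^ ((1 : Fin 3) : ℕ)) (LinearMap.range ι) :=
      Submodule.mem_map.mpr ⟨ι u1, LinearMap.mem_range_self ι u1, by rw [hv1, pow_one]⟩
    have m2 : U ρ (U ρ (ι u2)) ∈ Submodule.map (U ρ ^ ((2 : Fin 3) : ℕ)) (LinearMap.range ι) :=
      Submodule.mem_map.mpr ⟨ι u2, LinearMap.mem_range_self ι u2, by rw [hv2, pow_two]; rfl⟩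
    set E := LinearEquiv.ofBijective
      (DirectSum.coeLinearMap fun i : Fin 3 => Submodule.map (U ρ ^ (i : ℕ)) (LinearMap.range ι))
      hint with hE
    have hx0 : E.symm (ι u0) + E.symm (U ρ (ι u1)) + E.symm (U ρ (U ρ (ι u2))) = 0 := by
      rw [← map_add, ← map_add, hs, map_zero]
    refine ⟨?_, ?_, ?_⟩
    · have h0 := DFunLike.congr_fun hx0 (0 : Fin 3)
      rw [DirectSum.add_apply, DirectSum.add_apply, DirectSum.zero_apply] at h0
      rw [hint.ofBijective_coeLinearMap_of_mem m0,
        hint.ofBijective_coeLinearMap_of_mem_ne (by decide : (1 : Fin 3) ≠ 0) m1,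
        hint.ofBijective_coeLinearMap_of_mem_ne (by decide : (2 : Fin 3) ≠ 0) m2] at h0
      simpa using congrArg Subtype.val h0
    · have h0 := DFunLike.congr_fun hx0 (1 : Fin 3)
      rw [DirectSum.add_apply, DirectSum.add_apply, DirectSum.zero_apply] at h0
      rw [hint.ofBijective_coeLinearMap_of_mem m1,
        hint.ofBijective_coeLinearMap_of_mem_ne (by decide : (0 : Fin 3) ≠ 1) m0,
        hint.ofBijective_coeLinearMap_of_mem_ne (by decide : (2 : Fin 3) ≠ 1) m2] at h0
      simpa using congrArg Subtype.val h0
    · have h0 := DFunLike.congr_fun hx0 (2 : Fin 3)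
      rw [DirectSum.add_apply, DirectSum.add_apply, DirectSum.zero_apply] at h0
      rw [hint.ofBijective_coeLinearMap_of_mem m2,
        hint.ofBijective_coeLinearMap_of_mem_ne (by decide : (0 : Fin 3) ≠ 2) m0,
        hint.ofBijective_coeLinearMap_of_mem_ne (by decide : (1 : Fin 3) ≠ 2) m1] at h0
      simpa using congrArg Subtype.val h0
  have hker : ∀ f, Φ f = 0 → f = 0 := by
    intro f hf
    rw [hΦg] at hf
    obtain ⟨z0, z1, z2⟩ := hzero _ _ _ hf
    have c0 : f 0 + f 1 + f 2 = 0 := hι0 _ z0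
    have c1 : f 0 + ζ • f 1 + ζ ^ 2 • f 2 = 0 := hB0 _ (hι0 _ (hr0 _ z1))
    have c2 : f 0 + ζ ^ 2 • f 1 + ζ ^ 4 • f 2 = 0 := hB0 _ (hB0 _ (hι0 _ (hr0 _ (hr0 _ z2))))
    have e0' : ∀ x, f 0 x + f 1 x + f 2 x = 0 := by
      intro x
      simpa using congrFun c0 x
    have e1' : ∀ x, f 0 x + ζ * f 1 x + ζ ^ 2 * f 2 x = 0 := by
      intro x
      simpa [smul_eq_mul] using congrFun c1 x
    have e2' : ∀ x, f 0 x + ζ ^ 2 * f 1 x + ζ ^ 4 * f 2 x = 0 := by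
      intro x
      simpa [smul_eq_mul] using congrFun c2 x
    funext j x
    fin_cases j
    · show f 0 x = 0
      linear_combination e0' x + e1' x + e2' x - f 0 x * h2 - f 1 x * hsum - f 2 x * hsum
        - f 2 x * ζ * hζ3
    · show f 1 x = 0
      linear_combination e0' x + ζ ^ 2 * e1' x + ζ * e2' x - f 0 x * hsum - f 1 x * ζ ^ 3 * h2
        - f 2 x * hsum - f 2 x * ζ * hζ3 - f 2 x * ζ ^ 2 * hζ3
    · show f 2 x = 0
      linear_combination e0' x + ζ * e1' x + ζ ^ 2 * e2' x - f 0 x * hsum - f 1 x * hsum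
        - f 1 x * ζ * hζ3 - f 2 x * ζ ^ 3 * hζ3 - f 2 x * ζ ^ 3 * h2
  have hΦinj : Function.Injective Φ := by
    intro f g hfg
    have h' : Φ (f - g) = 0 := by rw [map_sub, hfg, sub_self]
    have := hker _ h'
    exact sub_eq_zero.mp this
  -- surjectivity
  have htop : ⊤ ≤ LinearMap.range Φ := by
    rw [← hint.submodule_iSup_eq_top]
    apply iSup_le
    intro t
    rintro x hx
    obtain ⟨y, ⟨u, rfl⟩, rfl⟩ := hx
    fin_cases t
    · refine ⟨fun _ => u, ?_⟩
      have k1 : u + u + u = u := by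
        funext x; simp only [Pi.add_apply]; linear_combination (u x) * h2
      have k2 : u + ζ • u + ζ ^ 2 • u = (0 : Fin n ⊕ Fin (n + 1) → k) := by
        funext x; simp only [Pi.add_apply, Pi.smul_apply, smul_eq_mul, Pi.zero_apply]
        linear_combination (u x) * hsum
      have k3 : u + ζ ^ 2 • u + ζ ^ 4 • u = (0 : Fin n ⊕ Fin (n + 1) → k) := by
        funext x; simp only [Pi.add_apply, Pi.smul_apply, smul_eq_mul, Pi.zero_apply]
        linear_combination (u x) * hsum + (u x) * ζ * hζ3
      have h' := hΦg (fun _ => u)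
      beta_reduce at h'
      rw [k1, k2, k3] at h'
      rw [h']
      simp only [map_zero, add_zero]
      rfl
    · refine ⟨![Am u, ζ ^ 2 • Am u, ζ • Am u], ?_⟩
      have h' := hΦg ![Am u, ζ ^ 2 • Am u, ζ • Am u]
      have hf0 : (![Am u, ζ ^ 2 • Am u, ζ • Am u] : Fin 3 → _) 0 = Am u := rfl
      have hf1 : (![Am u, ζ ^ 2 • Am u, ζ • Am u] : Fin 3 → _) 1 = ζ ^ 2 • Am u := rfl
      have hf2 : (![Am u, ζ ^ 2 • Am u, ζ • Am u] : Fin 3 → _) 2 = ζ • Am u := rfl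
      rw [hf0, hf1, hf2] at h'
      have k1 : Am u + ζ ^ 2 • Am u + ζ • Am u = (0 : Fin n ⊕ Fin (n + 1) → k) := by
        funext x; simp only [Pi.add_apply, Pi.smul_apply, smul_eq_mul, Pi.zero_apply]
        linear_combination (Am u x) * hsum
      have k2 : Am u + ζ • (ζ ^ 2 • Am u) + ζ ^ 2 • (ζ • Am u) = Am u := by
        funext x; simp only [Pi.add_apply, Pi.smul_apply, smul_eq_mul]
        linear_combination ((Am u x) * ζ ^ 3) * h2
      have k3 : Am u + ζ ^ 2 • (ζ ^ 2 • Am u) + ζ ^ 4 • (ζ • Am u)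
          = (0 : Fin n ⊕ Fin (n + 1) → k) := by
        funext x; simp only [Pi.add_apply, Pi.smul_apply, smul_eq_mul, Pi.zero_apply]
        linear_combination (Am u x) * hsum + (Am u x) * ζ * hζ3 + (Am u x) * ζ ^ 2 * hζ3
      rw [k1, k2, k3] at h'
      rw [h', hBA]
      simp only [map_zero, add_zero, zero_add]
      rfl
    · refine ⟨![Am (Am u), ζ • Am (Am u), ζ ^ 2 • Am (Am u)], ?_⟩
      have h' := hΦg ![Am (Am u), ζ • Am (Am u), ζ ^ 2 • Am (Am u)]
      have hf0 : (![Am (Am u), ζ • Am (Am u), ζ ^ 2 • Am (Am u)] : Fin 3 → _) 0 = Am (Am u) := rfl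
      have hf1 : (![Am (Am u), ζ • Am (Am u), ζ ^ 2 • Am (Am u)] : Fin 3 → _) 1
        = ζ • Am (Am u) := rfl
      have hf2 : (![Am (Am u), ζ • Am (Am u), ζ ^ 2 • Am (Am u)] : Fin 3 → _) 2
        = ζ ^ 2 • Am (Am u) := rfl
      rw [hf0, hf1, hf2] at h'
      have k1 : Am (Am u) + ζ • Am (Am u) + ζ ^ 2 • Am (Am u)
          = (0 : Fin n ⊕ Fin (n + 1) → k) := by
        funext x; simp only [Pi.add_apply, Pi.smul_apply, smul_eq_mul, Pi.zero_apply]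
        linear_combination (Am (Am u) x) * hsum
      have k2 : Am (Am u) + ζ • (ζ • Am (Am u)) + ζ ^ 2 • (ζ ^ 2 • Am (Am u))
          = (0 : Fin n ⊕ Fin (n + 1) → k) := by
        funext x; simp only [Pi.add_apply, Pi.smul_apply, smul_eq_mul, Pi.zero_apply]
        linear_combination (Am (Am u) x) * hsum + (Am (Am u) x) * ζ * hζ3
      have k3 : Am (Am u) + ζ ^ 2 • (ζ • Am (Am u)) + ζ ^ 4 • (ζ ^ 2 • Am (Am u))
          = Am (Am u) := by
        funext x; simp only [Pi.add_apply, Pi.smul_apply, smul_eq_mul]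
        linear_combination ((Am (Am u) x) * ζ ^ 3) * h2 + ((Am (Am u) x) * ζ ^ 3) * hζ3
      rw [k1, k2, k3] at h'
      have hred : B (B (Am (Am u))) = u := by rw [hBB, hAA, hBA]
      rw [h', hred]
      simp only [map_zero, add_zero, zero_add]
      rfl
  have hrange : LinearMap.range Φ = ⊤ := le_antisymm le_top htop
  have hbij : Function.Bijective Φ := ⟨hΦinj, LinearMap.range_eq_top.mp hrange⟩
  obtain ⟨e, he1, he2⟩ : ∃ e : W ≃ₗ[k] (Fin 3 → (Fin n ⊕ Fin (n + 1) → k)),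
      (∀ f, e (Φ f) = f) ∧ (∀ w, Φ (e w) = w) :=
    ⟨(LinearEquiv.ofBijective Φ hbij).symm,
      fun f => (LinearEquiv.ofBijective Φ hbij).symm_apply_apply f,
      fun w => (LinearEquiv.ofBijective Φ hbij).apply_symm_apply w⟩
  have hsingle : ∀ (i : Fin 3) v, e (φ i v) = Pi.single i v := by
    intro i v
    have hs : Φ (Pi.single i v) = φ i v := by
      rw [hΦ]
      fin_cases i <;>
        simp [Pi.single_eq_same, Pi.single_eq_of_ne, map_zero]
    rw [← hs, he1]
  have hφinj : ∀ i : Fin 3, Function.Injective (φ i) := by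
    intro i a b hab
    have h1 : (Pi.single i a : Fin 3 → (Fin n ⊕ Fin (n + 1) → k)) = Pi.single i b := by
      rw [← hsingle, ← hsingle, hab]
    have h2' := congrFun h1 i
    rwa [Pi.single_eq_same, Pi.single_eq_same] at h2'
  -- stability of the ranges of φ i under all of G
  have hstab : ∀ g : G, ∀ i : Fin 3,
      ∃ T : (Fin n ⊕ Fin (n + 1) → k) ≃ₗ[k] (Fin n ⊕ Fin (n + 1) → k),
      ∀ v, U g (φ i v) = φ i (T v) := by
    intro g
    have hg : g ∈ Subgroup.closure {σ, ρ} := by rw [hgen]; exact Subgroup.mem_top g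
    refine Subgroup.closure_induction ?_ ?_ ?_ ?_ hg
    · intro x hx
      rcases hx with h | h
      · rw [h]
        intro i
        have hσσ : (⟨σ, hσH⟩ : ↥H) * ⟨σ, hσH⟩ = 1 := by
          apply Subtype.ext
          exact hσ2
        have hinv2 : Sσl ∘ₗ Sσl = LinearMap.id := by
          apply LinearMap.ext; intro v
          show Sσl (Sσl v) = v
          rw [hSσl]
          calc (M ⟨σ, hσH⟩) ((M ⟨σ, hσH⟩) v) = (M ⟨σ, hσH⟩ * M ⟨σ, hσH⟩) v := rfl
            _ = v := by rw [← map_mul, hσσ, map_one]; rfl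
        exact ⟨LinearEquiv.ofLinear Sσl Sσl hinv2 hinv2, fun v => hLσ i v⟩
      · rw [h]
        intro i
        have hc1' : ((ζ ^ (2 * (i : ℕ))) • Am) ∘ₗ ((ζ ^ (i : ℕ)) • B) = LinearMap.id := by
          apply LinearMap.ext; intro v
          show (ζ ^ (2 * (i : ℕ))) • Am ((ζ ^ (i : ℕ)) • B v) = v
          simp only [map_smul, smul_smul]
          rw [hAB]
          rw [← pow_add, show 2 * (i : ℕ) + (i : ℕ) = 3 * (i : ℕ) by ring, hζ3i, one_smul]
        have hc2' : ((ζ ^ (i : ℕ)) • B) ∘ₗ ((ζ ^ (2 * (i : ℕ))) • Am) = LinearMap.id := by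
          apply LinearMap.ext; intro v
          show (ζ ^ (i : ℕ)) • B ((ζ ^ (2 * (i : ℕ))) • Am v) = v
          simp only [map_smul, smul_smul]
          rw [hBA]
          rw [← pow_add, show (i : ℕ) + 2 * (i : ℕ) = 3 * (i : ℕ) by ring, hζ3i, one_smul]
        exact ⟨LinearEquiv.ofLinear ((ζ ^ (2 * (i : ℕ))) • Am) ((ζ ^ (i : ℕ)) • B) hc1' hc2',
          fun v => hLρ i v⟩
    · intro i
      exact ⟨LinearEquiv.refl k _, fun v => by rw [map_one]; rfl⟩
    · intro x y _ _ hx hy i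
      obtain ⟨Tx, hTx⟩ := hx i
      obtain ⟨Ty, hTy⟩ := hy i
      refine ⟨Ty.trans Tx, fun v => ?_⟩
      calc U (x * y) (φ i v) = U x (U y (φ i v)) := by rw [map_mul]; rfl
        _ = U x (φ i (Ty v)) := by rw [hTy]
        _ = φ i (Tx (Ty v)) := hTx _
        _ = φ i ((Ty.trans Tx) v) := rfl
    · intro x _ hx i
      obtain ⟨Tx, hTx⟩ := hx i
      refine ⟨Tx.symm, fun v => ?_⟩
      have h1 : U x (φ i (Tx.symm v)) = φ i v := by rw [hTx, Tx.apply_symm_apply]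
      calc U x⁻¹ (φ i v) = U x⁻¹ (U x (φ i (Tx.symm v))) := by rw [h1]
        _ = (U x⁻¹ * U x) (φ i (Tx.symm v)) := rfl
        _ = φ i (Tx.symm v) := by rw [← map_mul, inv_mul_cancel, map_one]; rfl
  -- the conjugated linear maps
  obtain ⟨T, hT⟩ : ∃ T : Fin 3 → G →
        ((Fin n ⊕ Fin (n + 1) → k) →ₗ[k] (Fin n ⊕ Fin (n + 1) → k)),
      ∀ i g, T i g = LinearMap.proj i ∘ₗ e.toLinearMap ∘ₗ (U g) ∘ₗ (φ i) :=
    ⟨_, fun _ _ => rfl⟩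
  have hkey : ∀ g (i : Fin 3) v, U g (φ i v) = φ i (T i g v) := by
    intro g i v
    obtain ⟨Tx, hTx⟩ := hstab g i
    have h1 : T i g v = Tx v := by
      rw [hT]
      show (e (U g (φ i v))) i = Tx v
      rw [hTx, hsingle, Pi.single_eq_same]
    rw [h1, hTx]
  have hT1 : ∀ i : Fin 3, T i 1 = LinearMap.id := by
    intro i
    apply LinearMap.ext; intro v
    rw [hT]
    show (e (U 1 (φ i v))) i = v
    rw [map_one]
    show (e (φ i v)) i = v
    rw [hsingle, Pi.single_eq_same]
  have hTmul : ∀ (i : Fin 3) g h', T i (g * h') = T i g ∘ₗ T i h' := by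
    intro i g h'
    apply LinearMap.ext; intro v
    apply hφinj i
    calc φ i (T i (g * h') v) = U (g * h') (φ i v) := (hkey _ i v).symm
      _ = U g (U h' (φ i v)) := by rw [map_mul]; rfl
      _ = U g (φ i (T i h' v)) := by rw [hkey h' i v]
      _ = φ i (T i g (T i h' v)) := hkey g i _
      _ = φ i ((T i g ∘ₗ T i h') v) := rfl
  obtain ⟨Wr, hWrdef⟩ : ∃ Wr : Fin 3 → Representation k G (Fin n ⊕ Fin (n + 1) → k),
      ∀ i g, Wr i g = T i g :=
    ⟨fun i => ⟨⟨T i, by rw [hT1]; rfl⟩, fun g h' => by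
        show T i (g * h') = T i g * T i h'
        rw [hTmul, Module.End.mul_eq_comp]⟩, fun i g => rfl⟩
  -- restriction computation
  have hres : ∀ (i : Fin 3) x (hx : x ∈ Subgroup.closure {σ, τ}) (hxH : x ∈ H) v,
      T i x v = M ⟨x, hxH⟩ v := by
    intro i x hx
    refine Subgroup.closure_induction
      (p := fun y _ => ∀ (hyH : y ∈ H) (v : Fin n ⊕ Fin (n + 1) → k), T i y v = M ⟨y, hyH⟩ v)
      ?_ ?_ ?_ ?_ hx
    · intro y hy
      rcases hy with h | h
      · subst h
        intro hyH v
        apply hφinj i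
        rw [← hkey, hLσ i v, hSσl]
      · subst h
        intro hyH v
        apply hφinj i
        rw [← hkey, hLτ i v, hSτl]
    · intro hyH v
      rw [hT1]
      show v = M ⟨1, hyH⟩ v
      have h1 : (⟨1, hyH⟩ : ↥H) = 1 := rfl
      rw [h1, map_one]
      rfl
    · intro y z hy hz ihy ihz hyzH v
      have hyH : y ∈ H := by rw [hH]; exact hy
      have hzH : z ∈ H := by rw [hH]; exact hz
      have hmulH : (⟨y * z, hyzH⟩ : ↥H) = ⟨y, hyH⟩ * ⟨z, hzH⟩ := rfl
      calc T i (y * z) v = T i y (T i z v) := by rw [hTmul]; rfl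
        _ = T i y (M ⟨z, hzH⟩ v) := by rw [ihz hzH v]
        _ = M ⟨y, hyH⟩ (M ⟨z, hzH⟩ v) := ihy hyH _
        _ = M ⟨y * z, hyzH⟩ v := by rw [hmulH, map_mul]; rfl
    · intro y hy ihy hyinvH v
      have hyH : y ∈ H := by rw [hH]; exact hy
      have hMinv : M ⟨y, hyH⟩ (M ⟨y⁻¹, hyinvH⟩ v) = v := by
        have h1 : (⟨y, hyH⟩ : ↥H) * ⟨y⁻¹, hyinvH⟩ = 1 := by
          apply Subtype.ext
          simp
        calc M ⟨y, hyH⟩ (M ⟨y⁻¹, hyinvH⟩ v) = (M ⟨y, hyH⟩ * M ⟨y⁻¹, hyinvH⟩) v := rfl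
          _ = v := by rw [← map_mul, h1, map_one]; rfl
      calc T i y⁻¹ v = T i y⁻¹ (M ⟨y, hyH⟩ (M ⟨y⁻¹, hyinvH⟩ v)) := by rw [hMinv]
        _ = T i y⁻¹ (T i y (M ⟨y⁻¹, hyinvH⟩ v)) := by rw [ihy hyH]
        _ = (T i (y⁻¹ * y)) (M ⟨y⁻¹, hyinvH⟩ v) := by rw [hTmul]; rfl
        _ = M ⟨y⁻¹, hyinvH⟩ v := by rw [inv_mul_cancel, hT1]; rfl
  -- assemble
  refine ⟨Wr, ⟨e, ?_⟩, ?_⟩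
  · intro g w i
    have hUg : U g w = Φ (fun j => T j g (e w j)) := by
      conv_lhs => rw [← he2 w]
      rw [hΦ, map_add, map_add, hkey, hkey, hkey, hΦ]
    rw [hUg, he1, hWrdef]
  · intro i
    refine ⟨LinearEquiv.refl k _, fun h' v => ?_⟩
    obtain ⟨x, hxH⟩ := h'
    have hx : x ∈ Subgroup.closure {σ, τ} := by rw [← hH]; exact hxH
    have := hres i x hx hxH v
    simpa [hWrdef] using this
end
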